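/- arXiv:2203.13435 — 2 statements merged into one kernel-verified Lean document; each statement's English description precedes it below -/
import Mathlib

section
/- Let T = (V, A) be a polytree and I⁰, Iᵗ independent sets with |I⁰| = |Iᵗ| such that I⁰ is reconfigurable into Iᵗ under directed token sliding. Define R := {v ∈ I⁰ ∩ Iᵗ : w(e; I⁰, Iᵗ) = 0 for all arcs e incident to v}. Then in every reconfiguration sequence from I⁰ to Iᵗ, the set of vertices whose token never moves is exactly R. -/
open scoped Classical

variable {V : Type*}

/-- The underlying undirected simple graph of a digraph given by its arc relation. -/
def underlying (A : V → V → Prop) : SimpleGraph V := SimpleGraph.fromRel A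

/-- A polytree: a loopless digraph without antiparallel arcs whose underlying graph is a tree. -/
def IsPolytree (A : V → V → Prop) : Prop :=
  (∀ v, ¬ A v v) ∧ (∀ u v, A u v → ¬ A v u) ∧ (underlying A).IsTree

/-- `x` lies in the weakly connected component of `T - (a,b)` containing the tail `a`. -/
def InCminus (A : V → V → Prop) (a b x : V) : Prop :=
  ((underlying A).deleteEdges {s(a, b)}).Reachable a x

/-- `w((a,b); X, Y) = |C⁻ ∩ X| - |C⁻ ∩ Y|`. -/
noncomputable def wArc [Fintype V] [DecidableEq V] (A : V → V → Prop)
    (X Y : Finset V) (a b : V) : ℤ :=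
  ((X.filter fun x => InCminus A a b x).card : ℤ) -
    ((Y.filter fun x => InCminus A a b x).card : ℤ)

/-- Independence in the underlying undirected graph. -/
def IndepF (A : V → V → Prop) (I : Finset V) : Prop :=
  ∀ u ∈ I, ∀ v ∈ I, ¬ (underlying A).Adj u v

/-- One token-sliding step along an arc, in its direction. -/
def IsStep [DecidableEq V] (A : V → V → Prop) (I J : Finset V) : Prop :=
  ∃ u v, A u v ∧ I \ J = {u} ∧ J \ I = {v}

/-- A reconfiguration sequence of independent sets under directed token sliding. -/
def IsReconfSeq [DecidableEq V] (A : V → V → Prop) {ℓ : ℕ}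
    (f : Fin (ℓ + 1) → Finset V) : Prop :=
  (∀ i, IndepF A (f i)) ∧ ∀ i : Fin ℓ, IsStep A (f i.castSucc) (f i.succ)

/-- `I` is reconfigurable into `J` under directed token sliding. -/
def Reconfigurable [DecidableEq V] (A : V → V → Prop) (I J : Finset V) : Prop :=
  ∃ (ℓ : ℕ) (f : Fin (ℓ + 1) → Finset V),
    IsReconfSeq A f ∧ f 0 = I ∧ f (Fin.last ℓ) = J

/-- A directed path in the digraph `A`, given by its (distinct) vertices in order. -/
structure DirPath (A : V → V → Prop) where
  len : ℕ
  vtx : Fin (len + 1) → V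
  inj : Function.Injective vtx
  arc : ∀ i : Fin len, A (vtx i.castSucc) (vtx i.succ)

namespace DirPath
variable {A : V → V → Prop}
/-- The source of a directed path. -/
def src (p : DirPath A) : V := p.vtx 0
/-- The sink of a directed path. -/
def snk (p : DirPath A) : V := p.vtx (Fin.last p.len)
/-- The second vertex `s'(P)` of a directed path. -/
def sndVtx (p : DirPath A) : V := p.vtx ⟨min 1 p.len, by omega⟩
/-- The second-to-last vertex `t'(P)` of a directed path. -/
def penVtx (p : DirPath A) : V := p.vtx ⟨p.len - 1, by omega⟩
/-- `v` is a vertex of the path `p`. -/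
def mem (p : DirPath A) (v : V) : Prop := ∃ i, p.vtx i = v
/-- `x` is an internal vertex of `p` (neither source nor sink). -/
def internal (p : DirPath A) (x : V) : Prop :=
  ∃ i : Fin (p.len + 1), p.vtx i = x ∧ i ≠ 0 ∧ i ≠ Fin.last p.len
end DirPath

/-- A directed path matching from `X` to `Y`: distinct sources forming `X`,
distinct sinks forming `Y`. -/
def IsDPM [DecidableEq V] {A : V → V → Prop} {k : ℕ}
    (X Y : Finset V) (P : Fin k → DirPath A) : Prop :=
  (Function.Injective fun i => (P i).src) ∧ (Function.Injective fun i => (P i).snk) ∧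
  (Finset.univ.image fun i => (P i).src) = X ∧ (Finset.univ.image fun i => (P i).snk) = Y

/-- The path-set conditions (P1)–(P4). -/
def PathSetConds [DecidableEq V] {A : V → V → Prop} {k : ℕ}
    (X Y : Finset V) (P : Fin k → DirPath A) : Prop :=
  (∀ i, 2 ≤ (P i).len) ∧ IsDPM X Y P ∧
  (∀ i j, i ≠ j → (P i).sndVtx ≠ (P j).sndVtx) ∧
  (∀ i j, i ≠ j → (P i).penVtx ≠ (P j).penVtx)

/-- Length of the (unique, when it exists) directed path from `u` to `v`. -/
noncomputable def ddist (A : V → V → Prop) (u v : V) : ℕ :=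
  sInf {n | ∃ p : DirPath A, p.src = u ∧ p.snk = v ∧ p.len = n}

/-- A biased path pair: a common internal vertex `x` with
`dist(s(p),x) > dist(s(q),x)` and `dist(x,t(p)) > dist(x,t(q))`. -/
def BiasedPair (A : V → V → Prop) (p q : DirPath A) : Prop :=
  ∃ x, p.internal x ∧ q.internal x ∧
    ddist A q.src x < ddist A p.src x ∧ ddist A x q.snk < ddist A x p.snk

/-- A rigid token: `v ∈ X ∩ Y` and all incident arcs have `w`-value `0`. -/
def RigidTok [Fintype V] [DecidableEq V] (A : V → V → Prop) (X Y : Finset V) (v : V) : Prop :=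
  v ∈ X ∧ v ∈ Y ∧ ∀ a b, A a b → (a = v ∨ b = v) → wArc A X Y a b = 0

/-- A blocking arc: `w((u,v)) = 1` and every other arc incident to `u` or `v`
has `w`-value `0`. -/
def BlockingArc [Fintype V] [DecidableEq V] (A : V → V → Prop) (X Y : Finset V)
    (u v : V) : Prop :=
  A u v ∧ wArc A X Y u v = 1 ∧
    ∀ a b, A a b → (a, b) ≠ (u, v) → (a = u ∨ b = u ∨ a = v ∨ b = v) →
      wArc A X Y a b = 0

/-- A trajectory of a single token along a reconfiguration sequence. -/
def IsTrajectory [DecidableEq V] (A : V → V → Prop) {ℓ : ℕ}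
    (f : Fin (ℓ + 1) → Finset V) (g : Fin (ℓ + 1) → V) : Prop :=
  (∀ i, g i ∈ f i) ∧ ∀ i : Fin ℓ,
    g i.succ = g i.castSucc ∨
      (f i.castSucc \ f i.succ = {g i.castSucc} ∧ f i.succ \ f i.castSucc = {g i.succ})

/-- Number of steps of a reconfiguration sequence sliding a token from `u` to `v`. -/
noncomputable def movesAlong [DecidableEq V] {ℓ : ℕ} (f : Fin (ℓ + 1) → Finset V)
    (u v : V) : ℕ :=
  (Finset.univ.filter fun i : Fin ℓ =>
    f i.castSucc \ f i.succ = {u} ∧ f i.succ \ f i.castSucc = {v}).card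

/-- Number of forward arc traversals of a walk with vertex list `l`. -/
noncomputable def fwdCount (A : V → V → Prop) (l : List V) : ℕ :=
  (l.zip l.tail).countP fun p => decide (A p.1 p.2)

/-- Number of reverse arc traversals of a walk with vertex list `l`. -/
noncomputable def revCount (A : V → V → Prop) (l : List V) : ℕ :=
  (l.zip l.tail).countP fun p => decide (A p.2 p.1)

/-- Number of traversals of the ordered pair `(a, b)` by a walk with vertex list `l`. -/
def traverseCount [DecidableEq V] (l : List V) (a b : V) : ℕ :=
  (l.zip l.tail).count (a, b)

/-- A vertex `v` touches a directed path `p` if `N[v]` meets the vertex set of `p`. -/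
def Touches (A : V → V → Prop) (v : V) (p : DirPath A) : Prop :=
  ∃ u, p.mem u ∧ (u = v ∨ (underlying A).Adj v u)

/-- Independence in an undirected graph (for undirected token sliding). -/
def UIndep (G : SimpleGraph V) (I : Finset V) : Prop :=
  ∀ u ∈ I, ∀ v ∈ I, ¬ G.Adj u v

/-- One undirected token-sliding step along an edge. -/
def UIsStep [DecidableEq V] (G : SimpleGraph V) (I J : Finset V) : Prop :=
  ∃ u v, G.Adj u v ∧ I \ J = {u} ∧ J \ I = {v}

/-- Reconfigurability under (undirected) token sliding. -/
def UReconfigurable [DecidableEq V] (G : SimpleGraph V) (I J : Finset V) : Prop :=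
  ∃ (ℓ : ℕ) (f : Fin (ℓ + 1) → Finset V),
    (∀ i, UIndep G (f i)) ∧ (∀ i : Fin ℓ, UIsStep G (f i.castSucc) (f i.succ)) ∧
    f 0 = I ∧ f (Fin.last ℓ) = J

/-! In a tree every edge is a bridge, so sliding a token along the arc `(a, b)` moves it out of
`C⁻_{(a,b)}`, while any other slide keeps the token on its side of `(a, b)`. Hence the number of
tokens in `C⁻_{(a,b)}` drops by one at each slide along `(a, b)` and is otherwise constant:
`w((a,b); I⁰, Iᵗ)` is the number of slides along `(a, b)`. A token on `v` therefore never moves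
iff no slide uses an arc at `v`. -/

theorem Finset.sum_sub_sum_eq_of_sdiff_eq_singleton {α M : Type*} [DecidableEq α]
    [AddCommGroup M] {I J : Finset α} {u v : α} (hIJ : I \ J = {u}) (hJI : J \ I = {v})
    (g : α → M) : ∑ x ∈ I, g x - ∑ x ∈ J, g x = g u - g v := by
  rw [← Finset.sum_sdiff_sub_sum_sdiff, hIJ, hJI, Finset.sum_singleton, Finset.sum_singleton]

theorem Fin.sum_castSucc_sub_succ {M : Type*} [AddCommGroup M] {n : ℕ} (g : Fin (n + 1) → M) :
    ∑ i : Fin n, (g i.castSucc - g i.succ) = g 0 - g (Fin.last n) := by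
  rw [Finset.sum_sub_distrib, sub_eq_sub_iff_add_eq_add, ← Fin.sum_univ_castSucc,
    Fin.sum_univ_succ]

section Polytree

variable {A : V → V → Prop}

theorem inCminus_self {a b : V} : InCminus A a b a :=
  SimpleGraph.Reachable.refl a

theorem inCminus_iff_of_adj {a b u v : V} (huv : (underlying A).Adj u v)
    (hne : s(u, v) ≠ s(a, b)) : InCminus A a b u ↔ InCminus A a b v := by
  have huv' : ((underlying A).deleteEdges {s(a, b)}).Adj u v :=
    SimpleGraph.deleteEdges_adj.mpr ⟨huv, hne⟩
  exact ⟨fun h => h.trans huv'.reachable, fun h => h.trans huv'.symm.reachable⟩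

theorem IsPolytree.adj_of_arc (hT : IsPolytree A) {u v : V} (h : A u v) :
    (underlying A).Adj u v :=
  (SimpleGraph.fromRel_adj A u v).mpr ⟨fun huv => hT.1 u (huv ▸ h), Or.inl h⟩

theorem IsPolytree.not_inCminus_head (hT : IsPolytree A) {a b : V} (hab : A a b) :
    ¬ InCminus A a b b :=
  SimpleGraph.isBridge_iff.mp
    (SimpleGraph.isAcyclic_iff_forall_adj_isBridge.mp hT.2.2.2 (hT.adj_of_arc hab))

theorem IsPolytree.card_inCminus_sub_of_isStep [DecidableEq V] (hT : IsPolytree A) {a b : V}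
    (hab : A a b) {I J : Finset V} (hs : IsStep A I J) :
    ((I.filter (InCminus A a b)).card : ℤ) - (J.filter (InCminus A a b)).card
      = if I \ J = {a} ∧ J \ I = {b} then 1 else 0 := by
  obtain ⟨u, v, huv, hIJ, hJI⟩ := hs
  rw [Finset.natCast_card_filter, Finset.natCast_card_filter,
    Finset.sum_sub_sum_eq_of_sdiff_eq_singleton hIJ hJI, hIJ, hJI]
  simp only [Finset.singleton_inj]
  by_cases h : u = a ∧ v = b
  · obtain ⟨rfl, rfl⟩ := h
    simp [inCminus_self, hT.not_inCminus_head hab]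
  · have hne : s(u, v) ≠ s(a, b) := by
      rw [Ne, Sym2.eq_iff]
      rintro (⟨rfl, rfl⟩ | ⟨rfl, rfl⟩)
      exacts [h ⟨rfl, rfl⟩, hT.2.1 _ _ hab huv]
    simp [h, inCminus_iff_of_adj (hT.adj_of_arc huv) hne]

end Polytree

section Sequence

variable [DecidableEq V] {A : V → V → Prop} {ℓ : ℕ} {f : Fin (ℓ + 1) → Finset V}

theorem IsPolytree.wArc_eq_movesAlong [Fintype V] (hT : IsPolytree A) {a b : V} (hab : A a b)
    (hstep : ∀ i : Fin ℓ, IsStep A (f i.castSucc) (f i.succ)) :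
    wArc A (f 0) (f (Fin.last ℓ)) a b = movesAlong f a b := by
  rw [wArc, ← Fin.sum_castSucc_sub_succ fun j => (((f j).filter (InCminus A a b)).card : ℤ),
    movesAlong, Finset.natCast_card_filter]
  exact Finset.sum_congr rfl fun i _ => hT.card_inCminus_sub_of_isStep hab (hstep i)

theorem movesAlong_eq_zero_iff {a b : V} :
    movesAlong f a b = 0 ↔
      ∀ i : Fin ℓ, ¬ (f i.castSucc \ f i.succ = {a} ∧ f i.succ \ f i.castSucc = {b}) := by
  simp [movesAlong, Finset.filter_eq_empty_iff]

theorem movesAlong_eq_zero_of_forall_mem {v a b : V} (hv : ∀ i, v ∈ f i)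
    (hab : a = v ∨ b = v) : movesAlong f a b = 0 := by
  refine movesAlong_eq_zero_iff.mpr fun i ⟨hleave, henter⟩ => ?_
  rcases hab with rfl | rfl
  · exact (Finset.mem_sdiff.mp (hleave ▸ Finset.mem_singleton_self a)).2 (hv i.succ)
  · exact (Finset.mem_sdiff.mp (henter ▸ Finset.mem_singleton_self b)).2 (hv i.castSucc)

theorem forall_mem_of_movesAlong_eq_zero {v : V}
    (hstep : ∀ i : Fin ℓ, IsStep A (f i.castSucc) (f i.succ)) (hv : v ∈ f 0)
    (hstay : ∀ b, A v b → movesAlong f v b = 0) : ∀ i, v ∈ f i := by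
  intro i
  induction i using Fin.induction with
  | zero => exact hv
  | succ i ih =>
    by_contra hvi
    obtain ⟨u, b, hub, hleave, henter⟩ := hstep i
    obtain rfl : v = u := Finset.mem_singleton.mp (hleave ▸ Finset.mem_sdiff.mpr ⟨ih, hvi⟩)
    exact movesAlong_eq_zero_iff.mp (hstay b hub) i ⟨hleave, henter⟩

end Sequence

theorem stmt_5_general [Fintype V] [DecidableEq V] (A : V → V → Prop) (hT : IsPolytree A)
    (I0 It : Finset V)
    {ℓ : ℕ} (f : Fin (ℓ + 1) → Finset V) (hf : IsReconfSeq A f)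
    (hstart : f 0 = I0) (hend : f (Fin.last ℓ) = It) :
    {v : V | ∀ i, v ∈ f i} = {v : V | RigidTok A I0 It v} := by
  subst hstart hend
  have hw : ∀ a b, A a b → (wArc A (f 0) (f (Fin.last ℓ)) a b = 0 ↔ movesAlong f a b = 0) :=
    fun a b hab => by rw [hT.wArc_eq_movesAlong hab hf.2, Nat.cast_eq_zero]
  ext v
  constructor
  · intro hv
    exact ⟨hv 0, hv _, fun a b hab hinc =>
      (hw a b hab).mpr (movesAlong_eq_zero_of_forall_mem hv hinc)⟩
  · rintro ⟨hv0, -, hrigid⟩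
    exact forall_mem_of_movesAlong_eq_zero hf.2 hv0
      fun b hvb => (hw v b hvb).mp (hrigid v b hvb (Or.inl rfl))

/-- In every reconfiguration sequence from `I⁰` to `Iᵗ`, the set of
vertices whose token never moves is exactly
`R = {v ∈ I⁰ ∩ Iᵗ : w(e) = 0 for all arcs e incident to v}`. -/
theorem stmt_5 [Fintype V] [DecidableEq V] (A : V → V → Prop) (hT : IsPolytree A)
    (I0 It : Finset V) (h0 : IndepF A I0) (ht : IndepF A It) (hcard : I0.card = It.card)
    {ℓ : ℕ} (f : Fin (ℓ + 1) → Finset V) (hf : IsReconfSeq A f)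
    (hstart : f 0 = I0) (hend : f (Fin.last ℓ) = It) :
    {v : V | ∀ i, v ∈ f i} = {v : V | RigidTok A I0 It v} :=
  stmt_5_general A hT I0 It f hf hstart hend
end

section
/- Let T = (V, A) be a polytree and I⁰, Iᵗ independent sets of size k with no rigid tokens and no blocking arcs. Then there exists a set of directed paths satisfying the path-set conditions if and only if there exist mappings f : I⁰ → N⁺(I⁰) and g : Iᵗ → N⁻(Iᵗ) such that: (C1) f and g are injective; (C2) (s, f(s)) ∈ A for all s ∈ I⁰; (C3) (g(t), t) ∈ A for all t ∈ Iᵗ; and (C4) w(e; f(I⁰), g(Iᵗ)) ≥ 0 for every arc e ∈ A. -/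
open scoped Classical

variable {V : Type*}

/-! For (⇒), let `f(s)` and `g(t)` be the second and second-to-last vertices of the paths
starting at `s` and ending at `t`. The side `C⁻_e` of an arc `e` is closed under
in-neighbours, so a path whose second-to-last vertex lies in `C⁻_e` has its second vertex
there too; this gives (C4).

For (⇐), put `X = f(I⁰)` and `Y = g(Iᵗ)`. Condition (C4) says `|Y ∩ U| ≤ |X ∩ U|` for the
in-closed sets `U = C⁻_e`, and this extends to every in-closed `U` by induction on the
number of arcs leaving `U`: for such an arc `e`,
`1_U = 1_{U \ C⁻_e} + 1_{C⁻_e} + 1_{U ∪ (V \ C⁻_e)} - 1`, and both `U \ C⁻_e` and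
`U ∪ (V \ C⁻_e)` are in-closed with fewer leaving arcs. Applied to complements of
out-closures, this is Hall's condition for a bijection `X → Y` along directed reachability;
each matched pair `f(s) ⇝ g(t)` then gives a path `s → f(s) ⇝ g(t) → t`, simple because a
polytree has no directed cycles. -/

open Finset

section Polytree

variable {A : V → V → Prop} {a b x y : V}

lemma InCminus.of_adj (hx : InCminus A a b x) (hxy : (underlying A).Adj x y)
    (hne : s(x, y) ≠ s(a, b)) : InCminus A a b y :=
  hx.trans (SimpleGraph.Adj.reachable ((SimpleGraph.deleteEdges_adj ..).mpr ⟨hxy, hne⟩))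

namespace IsPolytree

lemma underlying_adj (hT : IsPolytree A) (h : A x y) : (underlying A).Adj x y :=
  ⟨fun hxy => hT.1 x (hxy ▸ h), Or.inl h⟩

lemma not_inCminus_head_s12 (hT : IsPolytree A) (hab : A a b) : ¬ InCminus A a b b :=
  SimpleGraph.isBridge_iff.mp <|
    SimpleGraph.isAcyclic_iff_forall_adj_isBridge.mp hT.2.2.isAcyclic (hT.underlying_adj hab)

lemma inCminus_tail (hT : IsPolytree A) (hab : A a b) (hxy : A x y)
    (hy : InCminus A a b y) : InCminus A a b x := by
  by_cases hne : s(y, x) = s(a, b)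
  · rcases Sym2.eq_iff.mp hne with ⟨rfl, rfl⟩ | ⟨rfl, rfl⟩
    · exact absurd hxy (hT.2.1 _ _ hab)
    · exact SimpleGraph.Reachable.refl _
  · exact hy.of_adj (hT.underlying_adj hxy).symm hne

lemma inCminus_of_reflTransGen (hT : IsPolytree A) (hab : A a b)
    (hxy : Relation.ReflTransGen A x y) (hy : InCminus A a b y) : InCminus A a b x := by
  induction hxy using Relation.ReflTransGen.head_induction_on with
  | refl => exact hy
  | head hxz _ ih => exact hT.inCminus_tail hab hxz ih

lemma inCminus_head_of_ne (hT : IsPolytree A) (hab : A a b) (hxy : A x y)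
    (hx : InCminus A a b x) (hne : (x, y) ≠ (a, b)) : InCminus A a b y := by
  refine hx.of_adj (hT.underlying_adj hxy) fun h => ?_
  rcases Sym2.eq_iff.mp h with ⟨rfl, rfl⟩ | ⟨rfl, rfl⟩
  · exact hne rfl
  · exact hT.2.1 _ _ hab hxy

lemma not_transGen_self (hT : IsPolytree A) (v : V) : ¬ Relation.TransGen A v v := by
  intro hv
  obtain ⟨w, hvw, hwv⟩ := Relation.TransGen.head'_iff.mp hv
  exact hT.not_inCminus_head_s12 hvw
    (hT.inCminus_of_reflTransGen hvw hwv (SimpleGraph.Reachable.refl v))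

end IsPolytree

end Polytree

namespace DirPath

variable {A : V → V → Prop}

lemma reflTransGen_vtx (p : DirPath A) {i j : Fin (p.len + 1)} (hij : i ≤ j) :
    Relation.ReflTransGen A (p.vtx i) (p.vtx j) := by
  obtain ⟨j, hj⟩ := j
  induction j with
  | zero => exact (Fin.ext (Nat.le_zero.mp hij) : i = ⟨0, hj⟩) ▸ .refl
  | succ j ih =>
    rcases (Fin.le_def.mp hij).lt_or_eq with hlt | heq
    · exact (ih (by omega) (Fin.le_def.mpr (by simp at hlt ⊢; omega))).tail
        (p.arc ⟨j, by omega⟩)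
    · exact (Fin.ext heq : i = ⟨j + 1, hj⟩) ▸ .refl

lemma reflTransGen_src (p : DirPath A) (i : Fin (p.len + 1)) :
    Relation.ReflTransGen A p.src (p.vtx i) :=
  p.reflTransGen_vtx (Fin.zero_le i)

lemma reflTransGen_snk (p : DirPath A) (i : Fin (p.len + 1)) :
    Relation.ReflTransGen A (p.vtx i) p.snk :=
  p.reflTransGen_vtx (Fin.le_last i)

lemma sndVtx_eq (p : DirPath A) (h : 1 ≤ p.len) : p.sndVtx = p.vtx ⟨1, by omega⟩ := by
  simp only [sndVtx, min_eq_left h]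

lemma arc_src_sndVtx (p : DirPath A) (h : 1 ≤ p.len) : A p.src p.sndVtx := by
  simpa [sndVtx_eq p h, src] using p.arc ⟨0, h⟩

lemma arc_penVtx_snk (p : DirPath A) (h : 1 ≤ p.len) : A p.penVtx p.snk := by
  have := p.arc ⟨p.len - 1, by omega⟩
  simp only [Fin.castSucc_mk, Fin.succ_mk, Nat.sub_add_cancel h] at this
  exact this

lemma reflTransGen_sndVtx_penVtx (p : DirPath A) (h : 2 ≤ p.len) :
    Relation.ReflTransGen A p.sndVtx p.penVtx := by
  rw [sndVtx_eq p (by omega)]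
  exact p.reflTransGen_vtx (Fin.le_def.mpr (by simp; omega))

def nil (v : V) : DirPath A where
  len := 0
  vtx _ := v
  inj i j _ := Fin.ext (by omega)
  arc i := i.elim0

def cons (u : V) (p : DirPath A) (h : A u p.src) (hu : u ∉ Set.range p.vtx) : DirPath A where
  len := p.len + 1
  vtx := Fin.cons u p.vtx
  inj := Fin.cons_injective_iff.mpr ⟨hu, p.inj⟩
  arc := Fin.cases h fun j => by
    rw [← Fin.succ_castSucc, Fin.cons_succ, Fin.cons_succ]
    exact p.arc j

def snoc (p : DirPath A) (w : V) (h : A p.snk w) (hw : w ∉ Set.range p.vtx) : DirPath A where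
  len := p.len + 1
  vtx := Fin.snoc p.vtx w
  inj := Fin.snoc_injective_iff.mpr ⟨p.inj, hw⟩
  arc := Fin.lastCases (by rw [Fin.succ_last, Fin.snoc_last, Fin.snoc_castSucc]; exact h)
    fun j => by
      rw [Fin.succ_castSucc, Fin.snoc_castSucc, Fin.snoc_castSucc]
      exact p.arc j

section Constructions

variable (p : DirPath A) {u w : V} (hup : A u p.src) (hu : u ∉ Set.range p.vtx)

@[simp] lemma cons_len : (p.cons u hup hu).len = p.len + 1 := rfl
@[simp] lemma cons_snk : (p.cons u hup hu).snk = p.snk :=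
  Fin.cons_succ (α := fun _ => V) u p.vtx (Fin.last p.len)

lemma cons_sndVtx : (p.cons u hup hu).sndVtx = p.src := by
  rw [sndVtx_eq _ (by simp)]
  exact Fin.cons_succ (α := fun _ => V) u p.vtx 0

lemma cons_penVtx (hp : 1 ≤ p.len) : (p.cons u hup hu).penVtx = p.penVtx := by
  have : (⟨p.len + 1 - 1, by omega⟩ : Fin (p.len + 2)) = Fin.succ ⟨p.len - 1, by omega⟩ :=
    Fin.ext (by simp; omega)
  exact (congrArg (Fin.cons u p.vtx) this).trans (Fin.cons_succ (α := fun _ => V) u p.vtx _)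

variable (hpw : A p.snk w) (hw : w ∉ Set.range p.vtx)

@[simp] lemma snoc_len : (p.snoc w hpw hw).len = p.len + 1 := rfl
@[simp] lemma snoc_src : (p.snoc w hpw hw).src = p.src :=
  Fin.snoc_castSucc (α := fun _ => V) w p.vtx 0
@[simp] lemma snoc_snk : (p.snoc w hpw hw).snk = w := Fin.snoc_last (α := fun _ => V) w p.vtx

lemma snoc_penVtx : (p.snoc w hpw hw).penVtx = p.snk :=
  Fin.snoc_castSucc (α := fun _ => V) w p.vtx (Fin.last p.len)

end Constructions

lemma not_mem_range_of_arc_src (hA : ∀ v, ¬ Relation.TransGen A v v) (p : DirPath A) {u : V}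
    (h : A u p.src) : u ∉ Set.range p.vtx := by
  rintro ⟨i, rfl⟩
  exact hA _ (Relation.TransGen.head'_iff.mpr ⟨_, h, p.reflTransGen_src i⟩)

lemma not_mem_range_of_arc_snk (hA : ∀ v, ¬ Relation.TransGen A v v) (p : DirPath A) {w : V}
    (h : A p.snk w) : w ∉ Set.range p.vtx := by
  rintro ⟨i, rfl⟩
  exact hA _ (Relation.TransGen.tail'_iff.mpr ⟨_, p.reflTransGen_snk i, h⟩)

lemma exists_of_reflTransGen (hA : ∀ v, ¬ Relation.TransGen A v v) {u v : V}
    (huv : Relation.ReflTransGen A u v) : ∃ p : DirPath A, p.src = u ∧ p.snk = v := by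
  induction huv using Relation.ReflTransGen.head_induction_on with
  | refl => exact ⟨nil v, rfl, rfl⟩
  | head hup _ ih =>
    obtain ⟨p, rfl, rfl⟩ := ih
    exact ⟨p.cons _ hup (not_mem_range_of_arc_src hA p hup), rfl, by simp⟩

lemma exists_of_arc_reflTransGen_arc (hA : ∀ v, ¬ Relation.TransGen A v v) {s x y t : V}
    (hsx : A s x) (hxy : Relation.ReflTransGen A x y) (hyt : A y t) :
    ∃ p : DirPath A, 2 ≤ p.len ∧ p.src = s ∧ p.snk = t ∧ p.sndVtx = x ∧ p.penVtx = y := by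
  obtain ⟨q, rfl, rfl⟩ := exists_of_reflTransGen hA hxy
  let q' := q.snoc t hyt (not_mem_range_of_arc_snk hA q hyt)
  have hsq' : A s q'.src := by simpa [q'] using hsx
  refine ⟨q'.cons s hsq' (not_mem_range_of_arc_src hA q' hsq'), by simp [q'], rfl, by simp [q'],
    cons_sndVtx .., ?_⟩
  rw [cons_penVtx _ _ _ (by simp [q']), snoc_penVtx]

end DirPath

lemma Function.Injective.injOn_extend {α β γ : Type*} {f : α → β} {g : α → γ}
    (hf : Function.Injective f) (hg : Function.Injective g) (e' : β → γ) :
    Set.InjOn (Function.extend f g e') (Set.range f) := by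
  rintro _ ⟨a, rfl⟩ _ ⟨b, rfl⟩ h
  rw [hf.extend_apply, hf.extend_apply] at h
  rw [hg h]

section PathFamily

variable [Fintype V] [DecidableEq V] {A : V → V → Prop} {k : ℕ} {P : Fin k → DirPath A}

lemma IsPolytree.wArc_image_sndVtx_penVtx_nonneg (hT : IsPolytree A)
    (hlen : ∀ i, 2 ≤ (P i).len) (hsnd : Function.Injective fun i => (P i).sndVtx)
    (hpen : Function.Injective fun i => (P i).penVtx) {a b : V} (hab : A a b) :
    0 ≤ wArc A (univ.image fun i => (P i).sndVtx) (univ.image fun i => (P i).penVtx) a b := by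
  rw [wArc, sub_nonneg, Nat.cast_le, filter_image, filter_image, card_image_of_injective _ hsnd,
    card_image_of_injective _ hpen]
  exact card_le_card <| monotone_filter_right _ fun i _ =>
    hT.inCminus_of_reflTransGen hab ((P i).reflTransGen_sndVtx_penVtx (hlen i))

theorem IsPolytree.exists_maps_of_pathSetConds (hT : IsPolytree A) {I0 It : Finset V}
    (h0 : IndepF A I0) (ht : IndepF A It) (hP : PathSetConds I0 It P) :
    ∃ f g : V → V, Set.InjOn f ↑I0 ∧ Set.InjOn g ↑It ∧
      (∀ s ∈ I0, A s (f s) ∧ f s ∉ I0) ∧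
      (∀ t ∈ It, A (g t) t ∧ g t ∉ It) ∧
      ∀ a b, A a b → 0 ≤ wArc A (I0.image f) (It.image g) a b := by
  obtain ⟨hlen, ⟨hsrc, hsnk, rfl, rfl⟩, hP3, hP4⟩ := hP
  have hsnd : Function.Injective fun i => (P i).sndVtx := fun i j h =>
    by_contra fun hij => hP3 i j hij h
  have hpen : Function.Injective fun i => (P i).penVtx := fun i j h =>
    by_contra fun hij => hP4 i j hij h
  refine ⟨Function.extend (fun i => (P i).src) (fun i => (P i).sndVtx) id,
    Function.extend (fun i => (P i).snk) (fun i => (P i).penVtx) id,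
    by simpa using hsrc.injOn_extend hsnd id, by simpa using hsnk.injOn_extend hpen id,
    ?_, ?_, fun a b hab => ?_⟩
  · rintro _ hs
    obtain ⟨i, -, rfl⟩ := mem_image.mp hs
    have harc := (P i).arc_src_sndVtx (by linarith [hlen i])
    rw [hsrc.extend_apply]
    exact ⟨harc, fun hmem => h0 _ hs _ hmem (hT.underlying_adj harc)⟩
  · rintro _ ht'
    obtain ⟨i, -, rfl⟩ := mem_image.mp ht'
    have harc := (P i).arc_penVtx_snk (by linarith [hlen i])
    rw [hsnk.extend_apply]
    exact ⟨harc, fun hmem => ht _ hmem _ ht' (hT.underlying_adj harc)⟩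
  · rw [image_image, image_image, Function.extend_comp hsrc, Function.extend_comp hsnk]
    exact hT.wArc_image_sndVtx_penVtx_nonneg hlen hsnd hpen hab

end PathFamily

section Cut

variable {A : V → V → Prop} {U : Set V} {a b : V}

def IsInClosed (A : V → V → Prop) (U : Set V) : Prop :=
  ∀ x y, A x y → y ∈ U → x ∈ U

lemma IsPolytree.isInClosed_diff (hT : IsPolytree A) (hab : A a b) (hU : IsInClosed A U)
    (hbU : b ∉ U) : IsInClosed A (U \ {x | InCminus A a b x}) := by
  rintro x y hxy ⟨hyU, hy⟩
  refine ⟨hU x y hxy hyU, fun hx => hy ?_⟩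
  exact hT.inCminus_head_of_ne hab hxy hx (by rintro ⟨⟩; exact hbU hyU)

lemma IsPolytree.isInClosed_union_compl (hT : IsPolytree A) (hab : A a b)
    (hU : IsInClosed A U) (haU : a ∈ U) : IsInClosed A (U ∪ {x | InCminus A a b x}ᶜ) := by
  rintro x y hxy (hyU | hy)
  · exact Or.inl (hU x y hxy hyU)
  · by_contra! hx
    simp only [Set.mem_union, Set.mem_compl_iff, Set.mem_ofPred_eq, not_or, not_not] at hx
    exact hy (hT.inCminus_head_of_ne hab hxy hx.2 (by rintro ⟨⟩; exact hx.1 haU))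

variable [Fintype V]

noncomputable def outArcs (A : V → V → Prop) (U : Set V) : Finset (V × V) :=
  Finset.univ.filter fun e => A e.1 e.2 ∧ e.1 ∈ U ∧ e.2 ∉ U

lemma mem_outArcs {e : V × V} : e ∈ outArcs A U ↔ A e.1 e.2 ∧ e.1 ∈ U ∧ e.2 ∉ U := by
  simp [outArcs]

lemma IsInClosed.eq_univ_of_outArcs_eq_empty (hU : IsInClosed A U)
    (hconn : (underlying A).Connected) (hout : outArcs A U = ∅) {u : V} (hu : u ∈ U) :
    U = Set.univ := by
  refine Set.eq_univ_of_forall fun v => ?_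
  induction (SimpleGraph.reachable_iff_reflTransGen u v).mp (hconn u v) with
  | refl => exact hu
  | tail _ hxy hx =>
    rcases hxy.2 with h | h
    · by_contra hy
      simpa [hout] using (mem_outArcs (e := (_, _))).mpr ⟨h, hx, hy⟩
    · exact hU _ _ h hx

lemma IsPolytree.outArcs_diff_ssubset (hT : IsPolytree A) (he : (a, b) ∈ outArcs A U) :
    outArcs A (U \ {x | InCminus A a b x}) ⊂ outArcs A U := by
  have hab := (mem_outArcs.mp he).1
  refine (Finset.ssubset_iff_of_subset fun ⟨x, y⟩ hxy' => ?_).mpr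
    ⟨(a, b), he, fun h => (mem_outArcs.mp h).2.1.2 (SimpleGraph.Reachable.refl a)⟩
  obtain ⟨hxy, ⟨hxU, hx⟩, hy⟩ := mem_outArcs.mp hxy'
  refine mem_outArcs.mpr ⟨hxy, hxU, fun hyU => hx (hT.inCminus_tail hab hxy ?_)⟩
  by_contra h
  exact hy ⟨hyU, h⟩

lemma IsPolytree.outArcs_union_compl_ssubset (hT : IsPolytree A) (he : (a, b) ∈ outArcs A U) :
    outArcs A (U ∪ {x | InCminus A a b x}ᶜ) ⊂ outArcs A U := by
  have hab := (mem_outArcs.mp he).1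
  refine (Finset.ssubset_iff_of_subset fun ⟨x, y⟩ hxy' => ?_).mpr
    ⟨(a, b), he, fun h => (mem_outArcs.mp h).2.2 (Or.inr (hT.not_inCminus_head_s12 hab))⟩
  obtain ⟨hxy, hx, hy⟩ := mem_outArcs.mp hxy'
  simp only [Set.mem_union, Set.mem_compl_iff, Set.mem_ofPred_eq, not_or, not_not] at hx hy
  exact mem_outArcs.mpr
    ⟨hxy, hx.resolve_right (not_not.mpr (hT.inCminus_tail hab hxy hy.2)), hy.1⟩

end Cut

lemma Finset.card_filter_add_card_eq {α : Type*} (Z : Finset α) (p q : α → Prop)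
    [DecidablePred p] [DecidablePred q] :
    #(Z.filter p) + #Z =
      #(Z.filter fun x => p x ∧ ¬ q x) + #(Z.filter q) + #(Z.filter fun x => p x ∨ ¬ q x) := by
  rw [card_filter, card_filter, card_filter, card_filter, card_eq_sum_ones, ← sum_add_distrib,
    ← sum_add_distrib, ← sum_add_distrib]
  refine Finset.sum_congr rfl fun x _ => ?_
  by_cases p x <;> by_cases q x <;> simp [*]

lemma IsPolytree.card_filter_le_of_isInClosed [Fintype V] [DecidableEq V] {A : V → V → Prop}
    (hT : IsPolytree A) {X Y : Finset V} (hXY : #X = #Y)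
    (hw : ∀ a b, A a b → 0 ≤ wArc A X Y a b) {U : Set V} (hU : IsInClosed A U) :
    #(Y.filter (· ∈ U)) ≤ #(X.filter (· ∈ U)) := by
  induction hn : #(outArcs A U) using Nat.strong_induction_on generalizing U with
  | _ n ih =>
  obtain hempty | ⟨⟨a, b⟩, he⟩ := (outArcs A U).eq_empty_or_nonempty
  · obtain ⟨u, hu⟩ | hU₀ := U.eq_empty_or_nonempty.symm
    · simp [hU.eq_univ_of_outArcs_eq_empty hT.2.2.connected hempty hu, hXY]
    · simp [hU₀]
  obtain ⟨hab, haU, hbU⟩ := mem_outArcs.mp he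
  have h₁ := ih _ (hn ▸ card_lt_card (hT.outArcs_diff_ssubset he))
    (hT.isInClosed_diff hab hU hbU) rfl
  have h₂ := ih _ (hn ▸ card_lt_card (hT.outArcs_union_compl_ssubset he))
    (hT.isInClosed_union_compl hab hU haU) rfl
  have hC := hw a b hab
  rw [wArc, sub_nonneg, Nat.cast_le] at hC
  have hX := X.card_filter_add_card_eq (· ∈ U) fun x => InCminus A a b x
  have hY := Y.card_filter_add_card_eq (· ∈ U) fun x => InCminus A a b x
  simp only [Set.mem_sdiff, Set.mem_union, Set.mem_compl_iff, Set.mem_ofPred_eq] at h₁ h₂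
  omega

theorem IsPolytree.exists_injOn_reflTransGen [Fintype V] [DecidableEq V] {A : V → V → Prop}
    (hT : IsPolytree A) {X Y : Finset V} (hXY : #X = #Y)
    (hw : ∀ a b, A a b → 0 ≤ wArc A X Y a b) :
    ∃ σ : V → V, Set.InjOn σ X ∧ ∀ x ∈ X, σ x ∈ Y ∧ Relation.ReflTransGen A x (σ x) := by
  have hall : ∀ s : Finset X,
      #s ≤ #(s.biUnion fun x => Y.filter (Relation.ReflTransGen A x.1 ·)) := by
    intro s
    let R : Set V := {v | ∃ x ∈ s, Relation.ReflTransGen A x.1 v}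
    have hR : IsInClosed A Rᶜ := fun u v huv hv ⟨x, hx, hxu⟩ => hv ⟨x, hx, hxu.tail huv⟩
    have hflow := hT.card_filter_le_of_isInClosed hXY hw hR
    have hX := X.card_filter_add_card_filter_not (· ∈ R)
    have hY := Y.card_filter_add_card_filter_not (· ∈ R)
    simp only [Set.mem_compl_iff] at hflow
    have hsX : s.map (.subtype _) ⊆ X.filter (· ∈ R) := by
      intro v hv
      obtain ⟨x, hx, rfl⟩ := mem_map.mp hv
      exact mem_filter.mpr ⟨x.2, x, hx, .refl⟩
    have hYs : Y.filter (· ∈ R) = s.biUnion fun x => Y.filter (Relation.ReflTransGen A x.1 ·) := by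
      ext y
      simp only [R, mem_filter, mem_biUnion, Set.mem_ofPred_eq]
      tauto
    calc #s = #(s.map (.subtype _)) := (card_map _).symm
      _ ≤ #(X.filter (· ∈ R)) := card_le_card hsX
      _ ≤ #(Y.filter (· ∈ R)) := by omega
      _ = _ := by rw [hYs]
  obtain ⟨f, hf, hfY⟩ := (all_card_le_biUnion_card_iff_exists_injective _).mp hall
  refine ⟨fun v => if hv : v ∈ X then f ⟨v, hv⟩ else v, fun x hx y hy hxy => ?_, fun x hx => ?_⟩
  · simp only [dif_pos (mem_coe.mp hx), dif_pos (mem_coe.mp hy)] at hxy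
    exact congrArg Subtype.val (hf hxy)
  · simpa [hx] using hfY ⟨x, hx⟩

theorem exists_pathSetConds_of_injective [DecidableEq V] {A : V → V → Prop}
    (hA : ∀ v, ¬ Relation.TransGen A v v) {I0 It : Finset V} (hcard : #I0 = #It)
    {f g : V → V} (hf : Set.InjOn f I0) (hg : Set.InjOn g It) {τ : I0 → It}
    (hτ : Function.Injective τ) (hfA : ∀ s ∈ I0, A s (f s)) (hgA : ∀ t ∈ It, A (g t) t)
    (hreach : ∀ s : I0, Relation.ReflTransGen A (f s) (g (τ s))) :
    ∃ P : Fin #I0 → DirPath A, PathSetConds I0 It P := by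
  have hpath : ∀ s : I0, ∃ p : DirPath A, 2 ≤ p.len ∧ p.src = s ∧ p.snk = τ s ∧
      p.sndVtx = f s ∧ p.penVtx = g (τ s) := fun s =>
    DirPath.exists_of_arc_reflTransGen_arc hA (hfA s s.2) (hreach s) (hgA _ (τ s).2)
  choose p hlen hsrc hsnk hsnd hpen using hpath
  set e := I0.equivFin.symm
  have he : ∀ {i j}, (e i : V) = e j → i = j := fun h => e.injective (Subtype.ext h)
  have hsnk_inj : Function.Injective fun i => (p (e i)).snk := fun i j h =>
    e.injective (hτ (Subtype.ext (by simpa only [hsnk] using h)))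
  have hsnd_inj : Function.Injective fun i => (p (e i)).sndVtx := fun i j h =>
    he (hf (e i).2 (e j).2 (by simpa only [hsnd] using h))
  have hpen_inj : Function.Injective fun i => (p (e i)).penVtx := fun i j h => by
    have := hg (τ (e i)).2 (τ (e j)).2 (by simpa only [hpen] using h)
    exact hsnk_inj (by simpa only [hsnk] using this)
  refine ⟨fun i => p (e i), fun i => hlen _, ⟨fun i j h => he (by simpa only [hsrc] using h),
    hsnk_inj, ?_, ?_⟩, fun i j hij h => hij (hsnd_inj h), fun i j hij h => hij (hpen_inj h)⟩
  · ext s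
    simp only [mem_image, mem_univ, true_and, hsrc]
    exact ⟨fun ⟨i, hi⟩ => hi ▸ (e i).2, fun hs => ⟨e.symm ⟨s, hs⟩, by simp⟩⟩
  · refine eq_of_subset_of_card_le (fun t ht => ?_) ?_
    · obtain ⟨i, -, rfl⟩ := mem_image.mp ht
      exact hsnk _ ▸ (τ (e i)).2
    · rw [card_image_of_injective _ hsnk_inj, card_univ, Fintype.card_fin, hcard]

theorem IsPolytree.exists_pathSetConds_of_maps [Fintype V] [DecidableEq V] {A : V → V → Prop}
    (hT : IsPolytree A) {I0 It : Finset V} (hcard : #I0 = #It) {f g : V → V}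
    (hf : Set.InjOn f I0) (hg : Set.InjOn g It) (hfA : ∀ s ∈ I0, A s (f s))
    (hgA : ∀ t ∈ It, A (g t) t) (hw : ∀ a b, A a b → 0 ≤ wArc A (I0.image f) (It.image g) a b) :
    ∃ P : Fin #I0 → DirPath A, PathSetConds I0 It P := by
  obtain ⟨σ, hσ, hσY⟩ := hT.exists_injOn_reflTransGen
    (by rw [card_image_of_injOn hf, card_image_of_injOn hg, hcard]) hw
  have hfX : ∀ s ∈ I0, f s ∈ I0.image f := fun s hs => mem_image_of_mem f hs
  have hτ : ∀ s : I0, ∃ t : It, g t = σ (f s) := fun s => by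
    obtain ⟨t, ht, hgt⟩ := mem_image.mp (hσY _ (hfX s s.2)).1
    exact ⟨⟨t, ht⟩, hgt⟩
  choose τ hgτ using hτ
  refine exists_pathSetConds_of_injective hT.not_transGen_self hcard hf hg
    (τ := τ) (fun s s' h => ?_) hfA hgA fun s => hgτ s ▸ (hσY _ (hfX s s.2)).2
  have := congrArg (g ∘ Subtype.val) h
  simp only [Function.comp_apply, hgτ] at this
  exact Subtype.ext (hf s.2 s'.2 (hσ (hfX s s.2) (hfX s' s'.2) this))

theorem stmt_12_general [Fintype V] [DecidableEq V] (A : V → V → Prop) (hT : IsPolytree A)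
    (I0 It : Finset V) (h0 : IndepF A I0) (ht : IndepF A It) (hcard : I0.card = It.card) :
    (∃ P : Fin I0.card → DirPath A, PathSetConds I0 It P) ↔
      ∃ f g : V → V, Set.InjOn f ↑I0 ∧ Set.InjOn g ↑It ∧
        (∀ s ∈ I0, A s (f s) ∧ f s ∉ I0) ∧
        (∀ t ∈ It, A (g t) t ∧ g t ∉ It) ∧
        ∀ a b, A a b → 0 ≤ wArc A (I0.image f) (It.image g) a b :=
  ⟨fun ⟨_, hP⟩ => hT.exists_maps_of_pathSetConds h0 ht hP,
    fun ⟨_, _, hf, hg, hfA, hgA, hw⟩ => hT.exists_pathSetConds_of_maps hcard hf hg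
      (fun s hs => (hfA s hs).1) (fun t ht => (hgA t ht).1) hw⟩

/-- Without rigid tokens and blocking arcs, a path family satisfying
(P1)–(P4) exists iff there are maps `f : I⁰ → N⁺(I⁰)`, `g : Iᵗ → N⁻(Iᵗ)`
satisfying (C1)–(C4). -/
theorem stmt_12 [Fintype V] [DecidableEq V] (A : V → V → Prop) (hT : IsPolytree A)
    (I0 It : Finset V) (h0 : IndepF A I0) (ht : IndepF A It) (hcard : I0.card = It.card)
    (hnr : ∀ v, ¬ RigidTok A I0 It v) (hnb : ∀ u v, ¬ BlockingArc A I0 It u v) :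
    (∃ P : Fin I0.card → DirPath A, PathSetConds I0 It P) ↔
      ∃ f g : V → V, Set.InjOn f ↑I0 ∧ Set.InjOn g ↑It ∧
        (∀ s ∈ I0, A s (f s) ∧ f s ∉ I0) ∧
        (∀ t ∈ It, A (g t) t ∧ g t ∉ It) ∧
        ∀ a b, A a b → 0 ≤ wArc A (I0.image f) (It.image g) a b :=
  stmt_12_general A hT I0 It h0 ht hcard
end
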